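/- arXiv:1704.04705 — 2 statements merged into one kernel-verified Lean document; each statement's English description precedes it below -/
import Mathlib

section
/- For s ∈ ℂ with Re(s) ≤ -1, the function f(x) = x^{-s} on (0,∞) is NOT asymptotically flat; specifically, for every x > 0 and every integer n ≥ 1, |(n+x)^{-s} - n^{-s}| ≥ x. -/
/-! With `r = Re(-s) ≥ 1`, the moduli of the two powers are `(n + x) ^ r` and `n ^ r`, and
`(n + x) ^ r ≥ n ^ (r - 1) * (n + x) = n ^ r + n ^ (r - 1) * x ≥ n ^ r + x` because `n ≥ 1`.
The reverse triangle inequality then bounds the difference of the powers by the difference of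
their moduli. -/

theorem Real.rpow_add_le_add_rpow_of_one_le {a x r : ℝ} (ha : 1 ≤ a) (hx : 0 ≤ x) (hr : 1 ≤ r) :
    a ^ r + x ≤ (a + x) ^ r := by
  have ha₀ : 0 < a := by linarith
  have hr₁ : 0 ≤ r - 1 := by linarith
  have h_one_le : 1 ≤ a ^ (r - 1) := Real.one_le_rpow ha hr₁
  have h_mono : a ^ (r - 1) ≤ (a + x) ^ (r - 1) :=
    Real.rpow_le_rpow ha₀.le (by linarith) hr₁
  calc a ^ r + x ≤ a ^ (r - 1) * (a + x) := by
        rw [mul_add, ← Real.rpow_add_one ha₀.ne', sub_add_cancel]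
        nlinarith
    _ ≤ (a + x) ^ (r - 1) * (a + x) := by gcongr
    _ = (a + x) ^ r := by
        rw [← Real.rpow_add_one (by linarith), sub_add_cancel]

theorem Complex.le_norm_ofReal_add_cpow_sub_cpow {s : ℂ} (hs : s.re ≤ -1) {a x : ℝ}
    (ha : 1 ≤ a) (hx : 0 ≤ x) :
    x ≤ ‖((a + x : ℝ) : ℂ) ^ (-s) - (a : ℂ) ^ (-s)‖ := by
  have hr : 1 ≤ (-s).re := by rw [Complex.neg_re]; linarith
  calc x ≤ (a + x) ^ (-s).re - a ^ (-s).re := by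
        linarith [Real.rpow_add_le_add_rpow_of_one_le ha hx hr]
    _ = ‖((a + x : ℝ) : ℂ) ^ (-s)‖ - ‖(a : ℂ) ^ (-s)‖ := by
        rw [Complex.norm_cpow_eq_rpow_re_of_pos (by linarith),
          Complex.norm_cpow_eq_rpow_re_of_pos (by linarith)]
    _ ≤ _ := norm_sub_norm_le _ _

theorem cpow_diff_lower_bound_general (s : ℂ) (hs : s.re ≤ -1) (x : ℝ)
    (n : ℕ) (hn : 1 ≤ n) :
    x ≤ ‖((n + x : ℝ) : ℂ) ^ (-s) - ((n : ℝ) : ℂ) ^ (-s)‖ := by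
  rcases le_or_gt x 0 with hx | hx
  · exact hx.trans (norm_nonneg _)
  · exact Complex.le_norm_ofReal_add_cpow_sub_cpow hs (by exact_mod_cast hn) hx.le

/-- For `s : ℂ` with `Re s ≤ -1`, the function `x ↦ x^{-s}` is not asymptotically flat;
specifically, for every `x > 0` and every integer `n ≥ 1`, `|(n+x)^{-s} - n^{-s}| ≥ x`. -/
theorem cpow_diff_lower_bound (s : ℂ) (hs : s.re ≤ -1) (x : ℝ) (hx : 0 < x)
    (n : ℕ) (hn : 1 ≤ n) :
    x ≤ ‖((n + x : ℝ) : ℂ) ^ (-s) - ((n : ℝ) : ℂ) ^ (-s)‖ :=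
  cpow_diff_lower_bound_general s hs x n hn
end

section
/- If f : (0,∞) → ℂ is asymptotically flat and summable, then for every natural number m, (Σf)(m) equals the ordinary finite sum Σ_{ν=1}^m f(ν) (and (Σf)(0) = 0). -/
open Filter Topology

/-- `f` is asymptotically flat on `(0,∞)`: `f(n+x) - f(n) → 0` for every `x > 0`. -/
def AsympFlat (f : ℝ → ℂ) : Prop :=
  ∀ x : ℝ, 0 < x → Tendsto (fun n : ℕ => f (n + x) - f n) atTop (𝓝 0)

/-- The approximating sequence `n ↦ x f(n) + ∑_{ν=1}^n (f(ν) - f(ν+x))`. -/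
noncomputable def sumSeq (f : ℝ → ℂ) (x : ℝ) (n : ℕ) : ℂ :=
  x * f n + ∑ ν ∈ Finset.Icc 1 n, (f ν - f (ν + x))

/-- `f` is summable: the limit of `sumSeq f x` exists for every `x > -1`. -/
def IsSummable (f : ℝ → ℂ) : Prop :=
  ∀ x : ℝ, -1 < x → ∃ L : ℂ, Tendsto (sumSeq f x) atTop (𝓝 L)

/-- The summation operator `Σ`: `(Σf)(x) = lim_{n→∞} sumSeq f x n`. -/
noncomputable def Sig (f : ℝ → ℂ) (x : ℝ) : ℂ := limUnder atTop (sumSeq f x)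

/-! For `x = m` a natural number the sum defining `sumSeq f m n` telescopes:
`sumSeq f m n = ∑_{ν=1}^m f ν - ∑_{k=1}^m (f (n + k) - f n)`, and asymptotic flatness sends each
of the finitely many differences `f (n + k) - f n` to `0`. -/

namespace Finset

theorem sum_range_sub_shift {M : Type*} [AddCommGroup M] (h : ℕ → M) (m n : ℕ) :
    ∑ i ∈ range n, (h i - h (i + m)) = ∑ k ∈ range m, h k - ∑ k ∈ range m, h (n + k) := by
  rw [sum_sub_distrib, sub_eq_sub_iff_add_eq_add, ← sum_range_add, add_comm n m, sum_range_add]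
  simp only [add_comm m]

theorem sum_Icc_one_eq_sum_range {M : Type*} [AddCommMonoid M] (g : ℕ → M) (n : ℕ) :
    ∑ ν ∈ Icc 1 n, g ν = ∑ i ∈ range n, g (i + 1) := by
  rw [← Ico_add_one_right_eq_Icc, sum_Ico_eq_sum_range, Nat.add_sub_cancel]
  simp only [add_comm 1]

theorem sum_Icc_one_sub_shift {M : Type*} [AddCommGroup M] (g : ℕ → M) (m n : ℕ) :
    ∑ ν ∈ Icc 1 n, (g ν - g (ν + m)) = ∑ ν ∈ Icc 1 m, g ν - ∑ k ∈ Icc 1 m, g (n + k) := by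
  simp only [sum_Icc_one_eq_sum_range, add_right_comm _ 1 m, ← add_assoc n]
  exact sum_range_sub_shift (fun i => g (i + 1)) m n

end Finset

open Finset

theorem sumSeq_natCast (f : ℝ → ℂ) (m n : ℕ) :
    sumSeq f m n = ∑ ν ∈ Icc 1 m, f ν - ∑ k ∈ Icc 1 m, (f (n + k) - f n) := by
  have hshift := sum_Icc_one_sub_shift (fun k : ℕ => f k) m n
  push_cast at hshift
  rw [sumSeq, hshift, sum_sub_distrib, sum_const, Nat.card_Icc, nsmul_eq_mul]
  push_cast
  ring

theorem AsympFlat.tendsto_sumSeq_natCast {f : ℝ → ℂ} (hf : AsympFlat f) (m : ℕ) :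
    Tendsto (sumSeq f m) atTop (𝓝 (∑ ν ∈ Icc 1 m, f ν)) := by
  have hflat : Tendsto (fun n : ℕ => ∑ k ∈ Icc 1 m, (f (n + k) - f n)) atTop (𝓝 0) := by
    simpa using tendsto_finsetSum (Icc 1 m) fun k hk =>
      hf k (by exact_mod_cast (mem_Icc.1 hk).1)
  have hlim := (tendsto_const_nhds (x := ∑ ν ∈ Icc 1 m, f ν)).sub hflat
  rw [sub_zero] at hlim
  exact hlim.congr fun n => (sumSeq_natCast f m n).symm

theorem Sig_nat_general (f : ℝ → ℂ) (hf : AsympFlat f) :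
    ∀ m : ℕ, Sig f m = ∑ ν ∈ Finset.Icc 1 m, f ν := fun m =>
  (hf.tendsto_sumSeq_natCast m).limUnder_eq

/-- If `f` is asymptotically flat and summable, then for every natural number `m`,
`(Σf)(m)` is the ordinary finite sum `∑_{ν=1}^m f(ν)` (in particular `(Σf)(0) = 0`). -/
theorem Sig_nat (f : ℝ → ℂ) (hf : AsympFlat f) (hsum : IsSummable f) :
    ∀ m : ℕ, Sig f m = ∑ ν ∈ Finset.Icc 1 m, f ν :=
  Sig_nat_general f hf
end
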